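/- Let u, t₁, t₂ be words in the free monoid on X such that t₁ and t₂ have the same length, both lengths are strictly less than the length of u, there exist positive integers a, b with t₁ u^b = u^a t₂, and u is neither a prefix of t₁ nor a suffix of t₂. Then t₁ is a prefix of u, t₂ is a suffix of u, and t₁ u = u t₂. -/

import Mathlib

/-!
Comparing lengths in `t₁ u^b = u^a t₂` forces `a = b`. Since `u^a = u · u^(a-1) = u^(a-1) · u`
and `|t₁| = |t₂| ≤ |u|`, reading the equation from the left gives `u = t₁ w` and reading it
from the right gives `u = v t₂`, with `|v| = |w|`. Substituting both and cancelling `t₁` yields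
`v · t₂ u^(a-1) = w · u^(a-1) t₂`, so `v = w` and `t₁ u = t₁ w t₂ = u t₂`.
-/

namespace FreeMonoid

variable {α : Type*} {a b c d : FreeMonoid α}

theorem length_pow (u : FreeMonoid α) (n : ℕ) : (u ^ n).length = n * u.length := by
  induction n with
  | zero => simp
  | succ n ih => rw [pow_succ, length_mul, ih, Nat.succ_mul]

theorem exists_eq_mul_of_mul_eq_mul_of_length_le (h : a * b = c * d)
    (hl : a.length ≤ c.length) : ∃ w, c = a * w := by
  obtain ⟨w, hw⟩ : a.toList <+: c.toList :=
    List.prefix_of_prefix_length_le (List.prefix_append _ _)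
      ⟨d.toList, congrArg toList h.symm⟩ hl
  exact ⟨ofList w, toList.injective hw.symm⟩

theorem exists_eq_mul_of_mul_eq_mul_of_length_le' (h : a * b = c * d)
    (hl : b.length ≤ d.length) : ∃ w, d = w * b := by
  obtain ⟨w, hw⟩ : b.toList <:+ d.toList :=
    List.suffix_of_suffix_length_le (List.suffix_append _ _)
      ⟨c.toList, congrArg toList h.symm⟩ hl
  exact ⟨ofList w, toList.injective hw.symm⟩

theorem eq_of_mul_eq_mul_of_length_eq (h : a * b = c * d) (hl : a.length = c.length) :
    a = c :=
  toList.injective (List.append_inj_left (congrArg toList h) hl)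

theorem mul_eq_mul_of_mul_pow_eq_pow_mul {t₁ t₂ u : FreeMonoid α} {n : ℕ} (hn : 0 < n)
    (hlen : t₁.length = t₂.length) (hle : t₁.length ≤ u.length)
    (h : t₁ * u ^ n = u ^ n * t₂) :
    (∃ w, u = t₁ * w) ∧ (∃ v, u = v * t₂) ∧ t₁ * u = u * t₂ := by
  obtain ⟨m, rfl⟩ : ∃ m, n = m + 1 := ⟨n - 1, by omega⟩
  obtain ⟨w, hw⟩ : ∃ w, u = t₁ * w :=
    exists_eq_mul_of_mul_eq_mul_of_length_le (h.trans (by rw [pow_succ', mul_assoc])) hle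
  obtain ⟨v, hv⟩ : ∃ v, u = v * t₂ :=
    exists_eq_mul_of_mul_eq_mul_of_length_le' (h.symm.trans (by rw [pow_succ, mul_assoc]))
      (hlen ▸ hle)
  have hvw : v = w := by
    have hcancel : t₁ * (v * (t₂ * u ^ m)) = t₁ * (w * (u ^ m * t₂)) :=
      calc t₁ * (v * (t₂ * u ^ m)) = t₁ * (v * t₂) * u ^ m := by simp only [mul_assoc]
        _ = u * u ^ m * t₂ := by rw [← hv, mul_assoc, ← pow_succ', h, pow_succ']
        _ = t₁ * w * u ^ m * t₂ := by rw [← hw]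
        _ = t₁ * (w * (u ^ m * t₂)) := by simp only [mul_assoc]
    refine eq_of_mul_eq_mul_of_length_eq (mul_left_cancel hcancel) ?_
    have hu := congrArg length (hv.symm.trans hw)
    rw [length_mul, length_mul] at hu
    omega
  refine ⟨⟨w, hw⟩, ⟨v, hv⟩, ?_⟩
  calc t₁ * u = t₁ * w * t₂ := by rw [hv, hvw, mul_assoc]
    _ = u * t₂ := by rw [← hw]

end FreeMonoid

theorem stmt_7_general (X : Type*) (u t₁ t₂ : FreeMonoid X)
    (hlen : t₁.length = t₂.length) (hlt : t₁.length < u.length)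
    (a b : ℕ) (ha : 0 < a) (heq : t₁ * u ^ b = u ^ a * t₂) :
    (∃ w : FreeMonoid X, u = t₁ * w) ∧ (∃ w : FreeMonoid X, u = w * t₂) ∧
      t₁ * u = u * t₂ := by
  have hab : b = a := by
    have hl := congrArg FreeMonoid.length heq
    simp only [FreeMonoid.length_mul, FreeMonoid.length_pow, hlen] at hl
    exact Nat.eq_of_mul_eq_mul_right (m := u.length) (by omega) (by omega)
  subst hab
  exact FreeMonoid.mul_eq_mul_of_mul_pow_eq_pow_mul ha hlen hlt.le heq

/-- If `|t₁| = |t₂| < |u|`, `t₁ u^b = u^a t₂` for some positive `a, b`, and `u`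
is neither a prefix of `t₁` nor a suffix of `t₂`, then `t₁` is a prefix of `u`,
`t₂` is a suffix of `u`, and `t₁ u = u t₂`. -/
theorem stmt_7 (X : Type*) (u t₁ t₂ : FreeMonoid X)
    (hlen : t₁.length = t₂.length) (hlt : t₁.length < u.length)
    (a b : ℕ) (ha : 0 < a) (hb : 0 < b) (heq : t₁ * u ^ b = u ^ a * t₂)
    (hpre : ¬ ∃ w : FreeMonoid X, t₁ = u * w)
    (hsuf : ¬ ∃ w : FreeMonoid X, t₂ = w * u) :
    (∃ w : FreeMonoid X, u = t₁ * w) ∧ (∃ w : FreeMonoid X, u = w * t₂) ∧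
      t₁ * u = u * t₂ :=
  stmt_7_general X u t₁ t₂ hlen hlt a b ha heq
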